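/- Let R be a commutative ring and b ∈ R. The 3×3 matrix B with rows (1, 1, −1), (0, b, 0), (0, 0, b) satisfies the generalised columns condition over R if and only if there exists d ∈ R with db = 0 and d^n R infinite for all n ≥ 0. -/
import Mathlib


open BigOperators

/-- A matrix `A` over `S` is partition regular over the `S`-module `M` for `r` colours if
every colouring of `M` with `r` colours admits a nonzero monochromatic solution of `A m = 0`. -/
def IsPR {S : Type*} [CommRing S] {k l : ℕ} (A : Matrix (Fin k) (Fin l) S)
    (M : Type*) [AddCommGroup M] [Module S M] (r : ℕ) : Prop :=
  ∀ χ : M → Fin r, ∃ m : Fin l → M, m ≠ 0 ∧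
    (∀ i, ∑ j, A i j • m j = 0) ∧ ∀ j j', χ (m j) = χ (m j')

/-- Partition regularity for every (positive) finite number of colours. -/
def IsPRAll {S : Type*} [CommRing S] {k l : ℕ} (A : Matrix (Fin k) (Fin l) S)
    (M : Type*) [AddCommGroup M] [Module S M] : Prop :=
  ∀ r : ℕ, 1 ≤ r → IsPR A M r

/-- The generalised columns condition of Bergelson--Deuber--Hindman--Lefmann. -/
def GenColumnsCondition {R : Type*} [CommRing R] {k l : ℕ}
    (A : Matrix (Fin k) (Fin l) R) : Prop :=
  ∃ (m : ℕ) (I : Fin (m + 1) → Finset (Fin l)) (d : Fin (m + 1) → R),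
    (∀ t, (I t).Nonempty) ∧
    (∀ t t', t ≠ t' → Disjoint (I t) (I t')) ∧
    (∀ j : Fin l, ∃ t, j ∈ I t) ∧
    (∀ t, d t ≠ 0) ∧
    (∀ i : Fin k, d 0 * ∑ j ∈ I 0, A i j = 0) ∧
    (∀ t : Fin (m + 1), 0 < t →
      (fun i : Fin k => d t * ∑ j ∈ I t, A i j) ∈
        Submodule.span R
          ((fun j (i : Fin k) => A i j) '' {j | ∃ t', t' < t ∧ j ∈ I t'})) ∧
    (0 < m → ∀ n : ℕ,
      (Set.range fun r : R =>
        d 0 * (∏ t ∈ Finset.univ.filter (fun t => t ≠ 0), d t) ^ n * r).Infinite)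

theorem gcc_matrixB_iff {R : Type*} [CommRing R] (b : R) :
    GenColumnsCondition (!![(1 : R), 1, -1; 0, b, 0; 0, 0, b]) ↔
      ∃ d : R, d * b = 0 ∧ ∀ n : ℕ, (Set.range fun r : R => d ^ n * r).Infinite := by
  set A : Matrix (Fin 3) (Fin 3) R := !![(1 : R), 1, -1; 0, b, 0; 0, 0, b] with hA
  have e00 : A 0 0 = 1 := rfl
  have e01 : A 0 1 = 1 := rfl
  have e02 : A 0 2 = -1 := rfl
  have e10 : A 1 0 = 0 := rfl
  have e11 : A 1 1 = b := rfl
  have e12 : A 1 2 = 0 := rfl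
  have e20 : A 2 0 = 0 := rfl
  have e21 : A 2 1 = 0 := rfl
  have e22 : A 2 2 = b := rfl
  have hfin3 : ∀ j : Fin 3, j ≠ 1 → j ≠ 2 → j = 0 := by decide
  have hne1 : ∀ j : Fin 3, j ≠ 1 → j = 0 ∨ j = 2 := by decide
  have hne2 : ∀ j : Fin 3, j ≠ 2 → j = 0 ∨ j = 1 := by decide
  have hne0 : ∀ j : Fin 3, j ≠ 0 → j = 1 ∨ j = 2 := by decide
  constructor
  · rintro ⟨m, I, d, hne, hdisj, hcover, hd0, hzero, hspan, hinf⟩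
    -- m is positive
    have hm : 0 < m := by
      rcases Nat.eq_zero_or_pos m with hm0 | hm0
      · exfalso
        subst hm0
        have huniv : I 0 = Finset.univ := by
          apply Finset.eq_univ_iff_forall.mpr
          intro j
          obtain ⟨t, ht⟩ := hcover j
          have : t = 0 := Fin.ext (by omega)
          rwa [this] at ht
        have h0 := hzero 0
        rw [huniv, Fin.sum_univ_three, e00, e01, e02] at h0
        simp at h0
        exact hd0 0 h0
      · exact hm0
    -- there is t > 0 with d t * b = 0
    have hkey : ∃ t : Fin (m + 1), 0 < t ∧ d t * b = 0 := by
      obtain ⟨t1, ht1⟩ := hcover 1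
      obtain ⟨t2, ht2⟩ := hcover 2
      rcases eq_or_ne t1 0 with h1 | h1
      · rcases eq_or_ne t2 0 with h2 | h2
        · -- both 1 and 2 in I 0; take t = ⟨1, _⟩
          rw [h1] at ht1
          rw [h2] at ht2
          set t : Fin (m + 1) := ⟨1, by omega⟩ with htdef
          have htpos : 0 < t := by
            rw [Fin.pos_iff_ne_zero]
            intro h
            have := congrArg Fin.val h
            simp [htdef] at this
          refine ⟨t, htpos, ?_⟩
          have hIt : I t = {0} := by
            apply Finset.eq_singleton_iff_unique_mem.mpr
            constructor
            · obtain ⟨j, hj⟩ := hne t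
              have hj1 : j ≠ 1 := by
                intro h; subst h
                exact (Finset.disjoint_left.mp (hdisj 0 t htpos.ne) ht1) hj
              have hj2 : j ≠ 2 := by
                intro h; subst h
                exact (Finset.disjoint_left.mp (hdisj 0 t htpos.ne) ht2) hj
              rwa [hfin3 j hj1 hj2] at hj
            · intro j hj
              have hj1 : j ≠ 1 := by
                intro h; subst h
                exact (Finset.disjoint_left.mp (hdisj 0 t htpos.ne) ht1) hj
              have hj2 : j ≠ 2 := by
                intro h; subst h
                exact (Finset.disjoint_left.mp (hdisj 0 t htpos.ne) ht2) hj
              exact hfin3 j hj1 hj2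
          have hsp := hspan t htpos
          set L : (Fin 3 → R) →ₗ[R] R :=
            b • LinearMap.proj 0 - LinearMap.proj 1 + LinearMap.proj 2 with hL
          have hLapp : ∀ v : Fin 3 → R, L v = b * v 0 - v 1 + v 2 := by
            intro v
            simp [hL]
          have hker : Submodule.span R
              ((fun j (i : Fin 3) => A i j) '' {j | ∃ t', t' < t ∧ j ∈ I t'})
                ≤ LinearMap.ker L := by
            rw [Submodule.span_le]
            rintro _ ⟨j, ⟨t', ht', hjt'⟩, rfl⟩
            have ht'0 : t' = 0 := by
              have h := Fin.lt_def.mp ht'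
              have hv : t.val = 1 := rfl
              have h0 : ((0 : Fin (m+1))).val = 0 := rfl
              exact Fin.ext (by omega)
            subst ht'0
            have hj0 : j ≠ 0 := by
              intro h; subst h
              exact (Finset.disjoint_left.mp (hdisj t (0 : Fin (m+1)) htpos.ne')
                (hIt ▸ Finset.mem_singleton_self 0)) hjt'
            simp only [SetLike.mem_coe, LinearMap.mem_ker, hLapp]
            rcases hne0 j hj0 with rfl | rfl
            · rw [e01, e11, e21]; ring
            · rw [e02, e12, e22]; ring
          have hLv := hker hsp
          rw [LinearMap.mem_ker, hLapp] at hLv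
          rw [hIt, Finset.sum_singleton, Finset.sum_singleton, Finset.sum_singleton,
            e00, e10, e20] at hLv
          linear_combination hLv
        · -- 2 ∈ I t2, t2 ≠ 0 : use row 2
          refine ⟨t2, Fin.pos_iff_ne_zero.mpr h2, ?_⟩
          have hsp := hspan t2 (Fin.pos_iff_ne_zero.mpr h2)
          have hker : Submodule.span R
              ((fun j (i : Fin 3) => A i j) '' {j | ∃ t', t' < t2 ∧ j ∈ I t'})
                ≤ LinearMap.ker (LinearMap.proj (R := R) (φ := fun _ : Fin 3 => R) 2) := by
            rw [Submodule.span_le]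
            rintro _ ⟨j, ⟨t', ht', hjt'⟩, rfl⟩
            have hj2 : j ≠ 2 := by
              intro h; subst h
              exact (Finset.disjoint_left.mp (hdisj t' t2 ht'.ne) hjt') ht2
            simp only [SetLike.mem_coe, LinearMap.mem_ker, LinearMap.proj_apply]
            rcases hne2 j hj2 with rfl | rfl
            · exact e20
            · exact e21
          have hLv := hker hsp
          rw [LinearMap.mem_ker] at hLv
          have hLv' : d t2 * ∑ j ∈ I t2, A 2 j = 0 := hLv
          have hsum : ∑ j ∈ I t2, A 2 j = b := by
            rw [Finset.sum_eq_single_of_mem 2 ht2]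
            · exact e22
            · intro j _ hj
              rcases hne2 j hj with rfl | rfl
              · exact e20
              · exact e21
          rw [hsum] at hLv'
          exact hLv'
      · -- 1 ∈ I t1, t1 ≠ 0 : use row 1
        refine ⟨t1, Fin.pos_iff_ne_zero.mpr h1, ?_⟩
        have hsp := hspan t1 (Fin.pos_iff_ne_zero.mpr h1)
        have hker : Submodule.span R
            ((fun j (i : Fin 3) => A i j) '' {j | ∃ t', t' < t1 ∧ j ∈ I t'})
              ≤ LinearMap.ker (LinearMap.proj (R := R) (φ := fun _ : Fin 3 => R) 1) := by
          rw [Submodule.span_le]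
          rintro _ ⟨j, ⟨t', ht', hjt'⟩, rfl⟩
          have hj1 : j ≠ 1 := by
            intro h; subst h
            exact (Finset.disjoint_left.mp (hdisj t' t1 ht'.ne) hjt') ht1
          simp only [SetLike.mem_coe, LinearMap.mem_ker, LinearMap.proj_apply]
          rcases hne1 j hj1 with rfl | rfl
          · exact e10
          · exact e12
        have hLv := hker hsp
        rw [LinearMap.mem_ker] at hLv
        have hLv' : d t1 * ∑ j ∈ I t1, A 1 j = 0 := hLv
        have hsum : ∑ j ∈ I t1, A 1 j = b := by
          rw [Finset.sum_eq_single_of_mem 1 ht1]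
          · exact e11
          · intro j _ hj
            rcases hne1 j hj with rfl | rfl
            · exact e10
            · exact e12
        rw [hsum] at hLv'
        exact hLv'
    obtain ⟨t0, ht0, ht0b⟩ := hkey
    set D : R := ∏ t ∈ Finset.univ.filter (fun t => t ≠ 0), d t with hD
    refine ⟨D, ?_, ?_⟩
    · have ht0mem : t0 ∈ Finset.univ.filter (fun t : Fin (m+1) => t ≠ 0) := by
        simp [Fin.pos_iff_ne_zero.mp ht0]
      rw [hD, ← Finset.mul_prod_erase _ _ ht0mem, mul_comm (d t0), mul_assoc, ht0b, mul_zero]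
    · intro n
      have hsub : (Set.range fun r : R => d 0 * D ^ n * r) ⊆
          Set.range fun r : R => D ^ n * r := by
        rintro _ ⟨r, rfl⟩
        exact ⟨d 0 * r, by ring⟩
      exact (hinf hm n).mono hsub
  · rintro ⟨d, hdb, hinf⟩
    have hd : d ≠ 0 := by
      intro h
      subst h
      have h1 := hinf 1
      apply h1
      have hs : (Set.range fun r : R => (0:R) ^ 1 * r) ⊆ {0} := by
        rintro _ ⟨r, rfl⟩; simp
      exact (Set.finite_singleton 0).subset hs
    refine ⟨1, ![{1, 2}, {0}], ![d, d], ?_, ?_, ?_, ?_, ?_, ?_, ?_⟩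
    · intro t; fin_cases t <;> simp
    · intro t t' htt'
      fin_cases t <;> fin_cases t' <;> simp_all
    · intro j
      fin_cases j
      · exact ⟨1, by simp⟩
      · exact ⟨0, by simp⟩
      · exact ⟨0, by simp⟩
    · intro t; fin_cases t <;> simpa using hd
    · intro i
      have hpair : ∀ i : Fin 3, ∑ j ∈ ({1, 2} : Finset (Fin 3)), A i j = A i 1 + A i 2 :=
        fun i => Finset.sum_pair (by decide)
      have hi3 : ∀ i : Fin 3, i = 0 ∨ i = 1 ∨ i = 2 := by decide
      rcases hi3 i with rfl | rfl | rfl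
      · show (![d, d] 0 : R) * ∑ j ∈ ({1, 2} : Finset (Fin 3)), A 0 j = 0
        rw [hpair, e01, e02]; simp
      · show (![d, d] 0 : R) * ∑ j ∈ ({1, 2} : Finset (Fin 3)), A 1 j = 0
        rw [hpair, e11, e12]; simpa using hdb
      · show (![d, d] 0 : R) * ∑ j ∈ ({1, 2} : Finset (Fin 3)), A 2 j = 0
        rw [hpair, e21, e22]; simpa using hdb
    · intro t ht
      have ht1 : t = 1 := by
        fin_cases t
        · exact absurd ht (by simp)
        · rfl
      subst ht1
      have himg : (fun j (i : Fin 3) => A i j) 1 ∈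
          ((fun j (i : Fin 3) => A i j) ''
            {j | ∃ t', t' < (1 : Fin 2) ∧ j ∈ (![{1, 2}, {0}] : Fin 2 → Finset (Fin 3)) t'}) := by
        exact ⟨1, ⟨0, by decide, by simp⟩, rfl⟩
      have hmem := Submodule.smul_mem _ d (Submodule.subset_span himg)
      convert hmem using 1
      funext i
      show (![d, d] 1 : R) * ∑ j ∈ ({0} : Finset (Fin 3)), A i j = d • A i 1
      rw [Finset.sum_singleton]
      have hd1 : (![d, d] 1 : R) = d := rfl
      rw [hd1, smul_eq_mul]
      have hi3 : ∀ i : Fin 3, i = 0 ∨ i = 1 ∨ i = 2 := by decide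
      rcases hi3 i with rfl | rfl | rfl
      · rw [e00, e01]
      · rw [e10, e11]; simp [hdb]
      · rw [e20, e21]
    · intro _ n
      have hf : (Finset.univ.filter (fun t : Fin 2 => t ≠ 0)) = {1} := by decide
      rw [hf]
      have hd1 : (![d, d] 1 : R) = d := rfl
      have hd0' : (![d, d] 0 : R) = d := rfl
      rw [Finset.prod_singleton, hd1, hd0']
      have h1 := hinf (n + 1)
      convert h1 using 3 with r
      rw [pow_succ']
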